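/- For a natural number m ≥ 1 and real n with 0 < n < 2: ∫₀^∞ x^m sin(πnx)/(e^{2πx}-1) dx = (√π n/(4(2π)^{m+1})) Σ_{k=0}^∞ (k+1)^{-(m+2)} · Σ_{ℓ=0}^∞ [Γ(m+2+2ℓ)/(ℓ! Γ(3/2+ℓ))] (-n²/(16(1+k)²))^ℓ. -/

import Mathlib

/-!
Expanding `1 / (exp (2πx) - 1) = ∑_{k ≥ 0} exp (-2π(k+1)x)` and then `sin (πnx)` in its Taylor
series reduces everything to the Gamma integrals `∫₀^∞ x^p exp (-ax) dx = p! / a^(p+1)`. Both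
interchanges of sum and integral are justified by summability of the integrals of the absolute
values: for the outer sum because `|sin y| ≤ |y|` makes the `k`-th term `O((k+1)^(-(m+2)))`, for
the inner one because `πn < 2π(k+1)`. Legendre's duplication formula
`l! Γ(l + 3/2) = √π (2l+1)! / 2^(2l+1)` then puts the coefficients in the stated Fox–Wright form.
-/

open Real Set MeasureTheory
open scoped Nat

lemma integrableOn_pow_mul_exp_neg_mul (p : ℕ) {r : ℝ} (hr : 0 < r) :
    IntegrableOn (fun x : ℝ => x ^ p * exp (-(r * x))) (Ioi 0) := by
  simpa [Real.rpow_natCast] using integrableOn_rpow_mul_exp_neg_mul_rpow (s := p) (p := 1)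
    (neg_one_lt_zero.trans_le p.cast_nonneg) one_pos hr

lemma integral_pow_mul_exp_neg_mul (p : ℕ) {r : ℝ} (hr : 0 < r) :
    ∫ x in Ioi (0 : ℝ), x ^ p * exp (-(r * x)) = p ! / r ^ (p + 1) := by
  have h := integral_rpow_mul_exp_neg_mul_Ioi (a := p + 1) (by positivity) hr
  simp only [add_sub_cancel_right, Real.rpow_natCast, Gamma_nat_eq_factorial] at h
  rw [h, ← Nat.cast_succ, Real.rpow_natCast, one_div_pow, one_div_mul_eq_div]

lemma factorial_add_eq_factorial_mul_descFactorial (j m : ℕ) :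
    (j + m)! = j ! * (j + m).descFactorial m := by
  simpa using (Nat.factorial_mul_descFactorial (Nat.le_add_left m j)).symm

lemma summable_descFactorial_mul_odd_pow (m : ℕ) {r : ℝ} (hr : |r| < 1) :
    Summable fun l : ℕ => ((2 * l + 1 + m).descFactorial m : ℝ) * r ^ (2 * l + 1) :=
  (summable_descFactorial_mul_geometric_of_norm_lt_one m (r := r) hr).comp_injective
    (f := fun j => ((j + m).descFactorial m : ℝ) * r ^ j)
    fun i j h => by simpa using h

lemma hasSum_exp_neg_succ_mul {t : ℝ} (ht : 0 < t) :
    HasSum (fun k : ℕ => exp (-((k + 1) * t))) (exp t - 1)⁻¹ := by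
  have h := (hasSum_geometric_of_lt_one (exp_pos _).le
    (exp_lt_one_iff.2 (neg_lt_zero.2 ht))).mul_left (exp (-t))
  have hterm : (fun k : ℕ => exp (-t) * exp (-t) ^ k) = fun k : ℕ => exp (-((k + 1) * t)) := by
    funext k
    rw [← exp_nat_mul, ← exp_add]; ring_nf
  rw [hterm] at h
  have : exp t - 1 ≠ 0 := (sub_pos.2 (one_lt_exp_iff.2 ht)).ne'
  rwa [show exp (-t) * (1 - exp (-t))⁻¹ = (exp t - 1)⁻¹ by rw [exp_neg]; field_simp] at h

theorem hasSum_integral_div_exp_sub_one {f : ℝ → ℝ} {c C : ℝ} {p : ℕ} (hc : 0 < c)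
    (hf_meas : AEStronglyMeasurable f (volume.restrict (Ioi 0)))
    (hf : ∀ x ∈ Ioi (0 : ℝ), |f x| ≤ C * x ^ (p + 1)) :
    HasSum (fun k : ℕ => ∫ x in Ioi 0, f x * exp (-(c * (k + 1) * x)))
      (∫ x in Ioi 0, f x / (exp (c * x) - 1)) := by
  have hck (k : ℕ) : 0 < c * (k + 1) := by positivity
  have hbound (k : ℕ) : ∀ᵐ x ∂volume.restrict (Ioi 0),
      ‖f x * exp (-(c * (k + 1) * x))‖ ≤ C * (x ^ (p + 1) * exp (-(c * (k + 1) * x))) := by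
    refine (ae_restrict_iff' measurableSet_Ioi).2 (ae_of_all _ fun x hx => ?_)
    rw [norm_mul, norm_of_nonneg (exp_pos _).le, ← mul_assoc]
    exact mul_le_mul_of_nonneg_right (hf x hx) (exp_pos _).le
  have hmajorant (k : ℕ) := (integrableOn_pow_mul_exp_neg_mul (p + 1) (hck k)).const_mul C
  have hint (k : ℕ) : Integrable (fun x => f x * exp (-(c * (k + 1) * x)))
      (volume.restrict (Ioi 0)) :=
    (hmajorant k).mono' (hf_meas.mul (by fun_prop : Continuous _).aestronglyMeasurable)
      (hbound k)
  have hsum : Summable fun k : ℕ => ∫ x in Ioi 0, ‖f x * exp (-(c * (k + 1) * x))‖ := by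
    refine .of_nonneg_of_le (fun k => integral_nonneg fun x => norm_nonneg _) (fun k => ?_)
      (((summable_nat_add_iff 1).2 (summable_one_div_nat_pow.2 (by omega : 1 < p + 2))).mul_left
        (C * (p + 1)! / c ^ (p + 2)))
    calc ∫ x in Ioi 0, ‖f x * exp (-(c * (k + 1) * x))‖
        ≤ ∫ x in Ioi 0, C * (x ^ (p + 1) * exp (-(c * (k + 1) * x))) :=
          integral_mono_ae (hint k).norm (hmajorant k) (hbound k)
      _ = C * (p + 1)! / c ^ (p + 2) * (1 / ((k + 1 : ℕ) : ℝ) ^ (p + 2)) := by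
          rw [integral_const_mul, integral_pow_mul_exp_neg_mul _ (hck k), mul_pow]
          push_cast
          field_simp
  have hpointwise : ∀ x ∈ Ioi (0 : ℝ),
      ∑' k : ℕ, f x * exp (-(c * (k + 1) * x)) = f x / (exp (c * x) - 1) := fun x hx => by
    rw [div_eq_mul_inv, ← (hasSum_exp_neg_succ_mul (mul_pos hc hx)).tsum_eq, ← tsum_mul_left]
    exact tsum_congr fun k => by ring_nf
  rw [← setIntegral_congr_fun measurableSet_Ioi hpointwise]
  exact hasSum_integral_of_summable_integral_norm hint hsum

theorem hasSum_integral_pow_mul_sin_mul_exp (m : ℕ) {a b : ℝ} (hab : |b| < a) :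
    HasSum (fun l : ℕ => (-1) ^ l * b ^ (2 * l + 1) / (2 * l + 1)! *
        ((m + 2 * l + 1)! / a ^ (m + 2 * l + 2)))
      (∫ x in Ioi 0, x ^ m * sin (b * x) * exp (-(a * x))) := by
  have ha : 0 < a := (abs_nonneg b).trans_lt hab
  set F : ℕ → ℝ → ℝ := fun l x =>
    (-1) ^ l * b ^ (2 * l + 1) / (2 * l + 1)! * (x ^ (m + 2 * l + 1) * exp (-(a * x)))
  have hint (l : ℕ) : Integrable (F l) (volume.restrict (Ioi 0)) :=
    (integrableOn_pow_mul_exp_neg_mul _ ha).const_mul _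
  have hintegral (l : ℕ) : ∫ x in Ioi 0, F l x =
      (-1) ^ l * b ^ (2 * l + 1) / (2 * l + 1)! * ((m + 2 * l + 1)! / a ^ (m + 2 * l + 2)) := by
    rw [integral_const_mul, integral_pow_mul_exp_neg_mul _ ha]
  have hnorm (l : ℕ) : ∫ x in Ioi 0, ‖F l x‖ =
      1 / a ^ (m + 1) * ((2 * l + 1 + m).descFactorial m * (|b| / a) ^ (2 * l + 1)) := by
    have hfac : ((m + 2 * l + 1)! : ℝ) = (2 * l + 1)! * (2 * l + 1 + m).descFactorial m := by
      rw [← Nat.cast_mul, ← factorial_add_eq_factorial_mul_descFactorial,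
        show m + 2 * l + 1 = 2 * l + 1 + m by ring]
    have hF : ∀ x ∈ Ioi (0 : ℝ), ‖F l x‖ =
        |b| ^ (2 * l + 1) / (2 * l + 1)! * (x ^ (m + 2 * l + 1) * exp (-(a * x))) :=
      fun x (hx : 0 < x) => by
      simp only [F, norm_mul, norm_div, norm_pow, norm_neg, norm_one, one_pow, one_mul,
        Real.norm_eq_abs, abs_of_pos (exp_pos _), abs_of_pos hx, Nat.abs_cast]
    rw [setIntegral_congr_fun measurableSet_Ioi hF, integral_const_mul,
      integral_pow_mul_exp_neg_mul _ ha, hfac, div_pow]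
    field_simp
    ring
  have hratio : |(|b| / a)| < 1 := by rwa [abs_div, abs_abs, abs_of_pos ha, div_lt_one ha]
  have hsum : Summable fun l => ∫ x in Ioi 0, ‖F l x‖ := by
    simpa only [hnorm] using
      (summable_descFactorial_mul_odd_pow m hratio).mul_left (1 / a ^ (m + 1))
  have hpointwise : ∀ x ∈ Ioi (0 : ℝ), ∑' l, F l x = x ^ m * sin (b * x) * exp (-(a * x)) :=
    fun x _ => by
    rw [← (Real.hasSum_sin (b * x)).tsum_eq, ← tsum_mul_left, ← tsum_mul_right]
    exact tsum_congr fun l => by ring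
  rw [← setIntegral_congr_fun measurableSet_Ioi hpointwise]
  simpa only [hintegral] using hasSum_integral_of_summable_integral_norm hint hsum

lemma factorial_mul_Gamma_add_three_halves (l : ℕ) :
    l ! * Gamma (l + 3 / 2) = √π * (2 * l + 1)! / 2 ^ (2 * l + 1) := by
  have h := Gamma_mul_Gamma_add_half ((l : ℝ) + 1)
  rw [Gamma_nat_eq_factorial, show (l : ℝ) + 1 + 1 / 2 = l + 3 / 2 by ring,
    show 1 - 2 * ((l : ℝ) + 1) = -(2 * l + 1 : ℕ) by push_cast; ring, rpow_neg zero_le_two,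
    rpow_natCast, show 2 * ((l : ℝ) + 1) = (2 * l + 1 : ℕ) + 1 by push_cast; ring,
    Gamma_nat_eq_factorial] at h
  rw [h]
  ring

lemma sin_series_term_eq_foxWright_term (m k l : ℕ) (n : ℝ) :
    (-1) ^ l * (π * n) ^ (2 * l + 1) / (2 * l + 1)! *
        ((m + 2 * l + 1)! / (2 * π * (k + 1)) ^ (m + 2 * l + 2)) =
      √π * n / (4 * (2 * π) ^ (m + 1)) *
        (1 / ((k : ℝ) + 1) ^ (m + 2) *
          (Gamma ((m : ℝ) + 2 + 2 * l) / ((l ! : ℝ) * Gamma (3 / 2 + l)) *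
            (-n ^ 2 / (16 * (1 + (k : ℝ)) ^ 2)) ^ l)) := by
  rw [show (m : ℝ) + 2 + 2 * l = (m + 2 * l + 1 : ℕ) + 1 by push_cast; ring,
    Gamma_nat_eq_factorial, add_comm (3 / 2 : ℝ), factorial_mul_Gamma_add_three_halves,
    add_comm 1 (k : ℝ), div_pow, neg_pow (n ^ 2), mul_pow (16 : ℝ), ← pow_mul, ← pow_mul,
    show (16 : ℝ) ^ l = 2 ^ (4 * l) by rw [pow_mul]; norm_num]
  have : √π ≠ 0 := by positivity
  have hK : (k : ℝ) + 1 ≠ 0 := by positivity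
  generalize (k : ℝ) + 1 = K at hK ⊢
  field_simp
  ring

theorem stmt14_general (m : ℕ) (n : ℝ) (hn : 0 < n) (hn2 : n < 2) :
    (∫ x in Ioi (0 : ℝ), x ^ m * Real.sin (π * n * x) / (Real.exp (2 * π * x) - 1)) =
      Real.sqrt π * n / (4 * (2 * π) ^ (m + 1)) *
        ∑' k : ℕ, (1 / ((k : ℝ) + 1) ^ (m + 2)) *
          ∑' l : ℕ, Real.Gamma ((m : ℝ) + 2 + 2 * l) /
            ((l.factorial : ℝ) * Real.Gamma (3 / 2 + l)) *
            (-n ^ 2 / (16 * (1 + (k : ℝ)) ^ 2)) ^ l := by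
  have hbound : ∀ x ∈ Ioi (0 : ℝ), |x ^ m * sin (π * n * x)| ≤ |π * n| * x ^ (m + 1) :=
    fun x (hx : 0 < x) => calc
      |x ^ m * sin (π * n * x)| = x ^ m * |sin (π * n * x)| := by
        rw [abs_mul, abs_of_pos (pow_pos hx m)]
      _ ≤ x ^ m * (|π * n| * x) := by
        gcongr
        exact abs_sin_le_abs.trans_eq (by rw [abs_mul _ x, abs_of_pos hx])
      _ = |π * n| * x ^ (m + 1) := by ring
  have houter := hasSum_integral_div_exp_sub_one two_pi_pos
    (by fun_prop : Continuous fun x : ℝ => x ^ m * sin (π * n * x)).aestronglyMeasurable hbound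
  rw [← houter.tsum_eq, ← tsum_mul_left]
  refine tsum_congr fun k => ?_
  have hab : |π * n| < 2 * π * (k + 1) := by
    rw [abs_of_pos (by positivity)]
    nlinarith [pi_pos, (k.cast_nonneg : (0 : ℝ) ≤ k)]
  rw [← (hasSum_integral_pow_mul_sin_mul_exp m hab).tsum_eq, ← tsum_mul_left, ← tsum_mul_left]
  exact tsum_congr fun l => sin_series_term_eq_foxWright_term m k l n

theorem stmt14 (m : ℕ) (hm : 1 ≤ m) (n : ℝ) (hn : 0 < n) (hn2 : n < 2) :
    (∫ x in Ioi (0 : ℝ), x ^ m * Real.sin (π * n * x) / (Real.exp (2 * π * x) - 1)) =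
      Real.sqrt π * n / (4 * (2 * π) ^ (m + 1)) *
        ∑' k : ℕ, (1 / ((k : ℝ) + 1) ^ (m + 2)) *
          ∑' l : ℕ, Real.Gamma ((m : ℝ) + 2 + 2 * l) /
            ((l.factorial : ℝ) * Real.Gamma (3 / 2 + l)) *
            (-n ^ 2 / (16 * (1 + (k : ℝ)) ^ 2)) ^ l :=
  stmt14_general m n hn hn2
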